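/- arXiv:1308.0191 — 2 statements merged into one kernel-verified Lean document; each statement's English description precedes it below -/
import Mathlib

section
/- If x : ℝ → ℝ² is differentiable, satisfies ẋ(t) = -k·x(t) + k·sat^δ(x(t) + w(t)/k) with k > 0, δ > 0, and any function w, and |x(0)| ≤ δ, then |x(t)| ≤ δ for all t ≥ 0. -/
open Classical in
noncomputable def sat {n : ℕ} (δ : ℝ) (x : EuclideanSpace ℝ (Fin n)) :
    EuclideanSpace ℝ (Fin n) :=
  if x = 0 then 0 else min 1 (δ / ‖x‖) • x

open Set

lemma norm_sat_le {n : ℕ} {δ : ℝ} (hδ : 0 ≤ δ) (x : EuclideanSpace ℝ (Fin n)) :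
    ‖sat δ x‖ ≤ δ := by
  unfold sat
  split_ifs with h
  · simpa using hδ
  · have hx : 0 < ‖x‖ := norm_pos_iff.mpr h
    calc ‖min 1 (δ / ‖x‖) • x‖ = min 1 (δ / ‖x‖) * ‖x‖ := by
          rw [norm_smul, Real.norm_of_nonneg (by positivity)]
      _ ≤ δ / ‖x‖ * ‖x‖ := by gcongr; exact min_le_right _ _
      _ = δ := div_mul_cancel₀ _ hx.ne'

lemma inner_neg_smul_add_smul_sat_neg {n : ℕ} {k δ : ℝ} (hk : 0 < k) (hδ : 0 ≤ δ)
    {y : EuclideanSpace ℝ (Fin n)} (z : EuclideanSpace ℝ (Fin n)) (hy : δ < ‖y‖) :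
    inner ℝ y (-k • y + k • sat δ z) < 0 := by
  have hsat : inner ℝ y (sat δ z) ≤ ‖y‖ * δ :=
    (real_inner_le_norm _ _).trans (mul_le_mul_of_nonneg_left (norm_sat_le hδ z) (norm_nonneg y))
  calc inner ℝ y (-k • y + k • sat δ z) = k * (inner ℝ y (sat δ z) - ‖y‖ ^ 2) := by
        rw [inner_add_right, real_inner_smul_right, real_inner_smul_right,
          real_inner_self_eq_norm_sq]
        ring
    _ ≤ k * (‖y‖ * (δ - ‖y‖)) := by gcongr; linarith
    _ < 0 := mul_neg_of_pos_of_neg hk (mul_neg_of_pos_of_neg (hδ.trans_lt hy) (sub_neg.mpr hy))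

/-- The barrier is `‖x‖² ≤ δ² + ε` rather than `‖x‖² ≤ δ²` because the inward condition is strict
only off the ball; letting `ε → 0` recovers the ball. -/
theorem norm_le_of_inner_deriv_neg {E : Type*} [NormedAddCommGroup E] [InnerProductSpace ℝ E]
    {x x' : ℝ → E} {a b δ : ℝ} (hx : ContinuousOn x (Icc a b))
    (hx' : ∀ t ∈ Ico a b, HasDerivWithinAt x (x' t) (Ici t) t)
    (hinward : ∀ t ∈ Ico a b, δ < ‖x t‖ → inner ℝ (x t) (x' t) < 0) (ha : ‖x a‖ ≤ δ) :
    ∀ ⦃t⦄, t ∈ Icc a b → ‖x t‖ ≤ δ := by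
  intro t ht
  have hsq : ∀ ε > 0, ‖x t‖ ^ 2 ≤ δ ^ 2 + ε := by
    intro ε hε
    refine image_le_of_deriv_right_lt_deriv_boundary (f := (‖x ·‖ ^ 2))
      (B := fun _ => δ ^ 2 + ε) (B' := 0) (hx.norm.pow 2) (fun s hs => (hx' s hs).norm_sq)
      ?_ (fun _ => hasDerivAt_const _ _) ?_ ht
    · have := pow_le_pow_left₀ (norm_nonneg _) ha 2
      linarith
    · intro s hs hcontact
      have hout : δ < ‖x s‖ :=
        lt_of_pow_lt_pow_left₀ 2 (norm_nonneg _) (by linarith)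
      simpa using mul_neg_of_pos_of_neg two_pos (hinward s hs hout)
  exact le_of_pow_le_pow_left₀ two_ne_zero ((norm_nonneg _).trans ha)
    (le_of_forall_pos_le_add hsq)

theorem tilt_saturation_invariance_general
    (k δ : ℝ) (hk : 0 < k)
    (x w : ℝ → EuclideanSpace ℝ (Fin 2))
    (hx : ∀ t : ℝ, HasDerivAt x (-k • x t + k • sat δ (x t + k⁻¹ • w t)) t)
    (h0 : ‖x 0‖ ≤ δ) :
    ∀ t : ℝ, 0 ≤ t → ‖x t‖ ≤ δ := by
  intro T hT
  have hδ : 0 ≤ δ := (norm_nonneg _).trans h0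
  exact norm_le_of_inner_deriv_neg (fun t _ => (hx t).continuousAt.continuousWithinAt)
    (fun t _ => (hx t).hasDerivWithinAt)
    (fun t _ hout => inner_neg_smul_add_smul_sat_neg hk hδ _ hout) h0 ⟨hT, le_rfl⟩

theorem tilt_saturation_invariance
    (k δ : ℝ) (hk : 0 < k) (hδ0 : 0 < δ) (hδ1 : δ < 1)
    (x w : ℝ → EuclideanSpace ℝ (Fin 2))
    (hw : Continuous w)
    (hx : ∀ t : ℝ, HasDerivAt x (-k • x t + k • sat δ (x t + k⁻¹ • w t)) t)
    (h0 : ‖x 0‖ ≤ δ) :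
    ∀ t : ℝ, 0 ≤ t → ‖x t‖ ≤ δ :=
  tilt_saturation_invariance_general k δ hk x w hx h0
end

section
/- Consider the velocity error dynamics m(d/dt)ṽ = -T̄u + F with F = T_r u_r (T_r = |F| > 0, u_r = F/|F|), closed-loop controls T̄ = T_r(u·u_r) + k₁m(u·ṽ) and thrust-direction kinematics such that d/dt(u·u_r) is as induced by ω_I^u in equation (11). Then the Lyapunov function L = (T_r²/(k₂m²))(1 - u·u_r) + (1/2)|ṽ|² satisfies L̇ = -(k₃/k₂)(T_r²/m²)·|u×u_r|²/(1+u·u_r)² - k₁(u·ṽ)² ≤ 0. -/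
/-!
Along the closed loop, the alignment `a = u ⬝ᵥ u_r` changes at the rate `ω ⬝ᵥ (u ×₃ u_r) + u ⬝ᵥ u̇_r`.
As `u` and `u_r` are unit vectors, `u_r ⬝ᵥ u̇_r = 0`, so the feedforward term
`-u ×₃ (u ×₃ (u_r ×₃ u̇_r))` of `ω` contributes exactly `-u ⬝ᵥ u̇_r`. In `L̇` the term
`(k₂ m / T_r) (u ×₃ ṽ)` then cancels the coupling `T_r (ṽ ⬝ᵥ u_r - a (u ⬝ᵥ ṽ)) / m` coming from the
velocity error dynamics, and `k̄₃` cancels the contribution of `Ṫ_r`. Lagrange's identity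
`|u ×₃ u_r|² = 1 - a²` then leaves only the two nonpositive damping terms.
-/

open Matrix

theorem HasDerivAt.dotProduct {𝕜 ι : Type*} [NontriviallyNormedField 𝕜] [Fintype ι]
    {f g : 𝕜 → ι → 𝕜} {f' g' : ι → 𝕜} {t : 𝕜}
    (hf : HasDerivAt f f' t) (hg : HasDerivAt g g' t) :
    HasDerivAt (fun s => f s ⬝ᵥ g s) (f' ⬝ᵥ g t + f t ⬝ᵥ g') t := by
  have h := HasDerivAt.fun_sum fun i (_ : i ∈ Finset.univ) =>
    (hasDerivAt_pi.1 hf i).mul (hasDerivAt_pi.1 hg i)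
  exact h.congr_deriv Finset.sum_add_distrib

theorem HasDerivAt.dotProduct_eq_zero_of_dotProduct_self_eq {ι : Type*} [Fintype ι]
    {f : ℝ → ι → ℝ} {f' : ι → ℝ} {t c : ℝ}
    (hf : HasDerivAt f f' t) (h : ∀ s, f s ⬝ᵥ f s = c) : f t ⬝ᵥ f' = 0 := by
  have hconst : HasDerivAt (fun s => f s ⬝ᵥ f s) 0 t := by
    simpa only [h] using hasDerivAt_const t c
  have := (hf.dotProduct hf).unique hconst
  rw [dotProduct_comm] at this
  linarith

theorem cross_cross_cross_dotProduct_cross {u w w' : Fin 3 → ℝ} (hu : u ⬝ᵥ u = 1)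
    (hw : w ⬝ᵥ w = 1) (hww' : w ⬝ᵥ w' = 0) :
    u ⨯₃ (u ⨯₃ (w ⨯₃ w')) ⬝ᵥ u ⨯₃ w = u ⬝ᵥ w' := by
  rw [cross_dot_cross, dotProduct_comm (u ⨯₃ _) u, dot_self_cross, cross_cross_eq_smul_sub_smul',
    sub_dotProduct, smul_dotProduct, smul_dotProduct, hw, dotProduct_comm w' w, hww', hu]
  simp

theorem thrust_alignment_rate {u v w w' : Fin 3 → ℝ} (α β : ℝ) (hu : u ⬝ᵥ u = 1)
    (hw : w ⬝ᵥ w = 1) (hww' : w ⬝ᵥ w' = 0) :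
    (α • u ⨯₃ v + β • u ⨯₃ w - u ⨯₃ (u ⨯₃ (w ⨯₃ w'))) ⨯₃ u ⬝ᵥ w + u ⬝ᵥ w'
      = α * (v ⬝ᵥ w - u ⬝ᵥ w * u ⬝ᵥ v) + β * (1 - (u ⬝ᵥ w) ^ 2) := by
  rw [dotProduct_comm, triple_product_permutation, sub_dotProduct, add_dotProduct,
    smul_dotProduct, smul_dotProduct, cross_cross_cross_dotProduct_cross hu hw hww',
    cross_dot_cross, cross_dot_cross, hu, hw, dotProduct_comm v u, dotProduct_comm w u,
    smul_eq_mul, smul_eq_mul]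
  ring

theorem inv_sqrt_smul_dotProduct_self {ι : Type*} [Fintype ι] {v : ι → ℝ}
    (hv : 0 < v ⬝ᵥ v) : (√(v ⬝ᵥ v))⁻¹ • v ⬝ᵥ (√(v ⬝ᵥ v))⁻¹ • v = 1 := by
  rw [smul_dotProduct, dotProduct_smul, smul_eq_mul, smul_eq_mul, ← mul_assoc, ← mul_inv,
    Real.mul_self_sqrt hv.le, inv_mul_cancel₀ hv.ne']

theorem lyapunov_rate_nonpos {ι : Type*} [Fintype ι] {k₁ k₂ k₃ : ℝ} (hk₁ : 0 ≤ k₁)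
    (hk₂ : 0 ≤ k₂) (hk₃ : 0 ≤ k₃) (T m A b : ℝ) (x : ι → ℝ) :
    -(k₃ / k₂) * (T ^ 2 / m ^ 2) * (x ⬝ᵥ x) / A ^ 2 - k₁ * b ^ 2 ≤ 0 := by
  have hx : 0 ≤ x ⬝ᵥ x := by simpa only [star_trivial] using dotProduct_self_star_nonneg x
  have : 0 ≤ k₃ / k₂ * (T ^ 2 / m ^ 2) * (x ⬝ᵥ x) / A ^ 2 := by positivity
  have : 0 ≤ k₁ * b ^ 2 := by positivity
  rw [neg_mul, neg_mul, neg_div]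
  linarith

theorem velocity_tracking_lyapunov_derivative_general
    (m k₁ k₂ k₃ c : ℝ) (hm : 0 < m) (hk₁ : 0 < k₁) (hk₂ : 0 < k₂)
    (hk₃ : 0 < k₃) (hc : 0 < c)
    (vt vt' u u' F ur ur' : ℝ → Fin 3 → ℝ) (Tr Tr' : ℝ → ℝ)
    (hunit : ∀ t, u t ⬝ᵥ u t = 1)
    (hFlow : ∀ t, c ≤ Real.sqrt (F t ⬝ᵥ F t))
    (hTr : ∀ t, Tr t = Real.sqrt (F t ⬝ᵥ F t))
    (hTr' : ∀ t, HasDerivAt Tr (Tr' t) t)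
    (hur : ∀ t, ur t = (Tr t)⁻¹ • F t)
    (hur' : ∀ t, HasDerivAt ur (ur' t) t)
    (hang : ∀ t, 0 < 1 + u t ⬝ᵥ ur t)
    (hvt : ∀ t, HasDerivAt vt (vt' t) t)
    (hdyn : ∀ t, m • vt' t
        = -(Tr t * (u t ⬝ᵥ ur t) + k₁ * m * (u t ⬝ᵥ vt t)) • u t + F t)
    (hu : ∀ t, HasDerivAt u (u' t) t)
    (hkin : ∀ t, u' t = crossProduct
        ((k₂ * m / Tr t) • crossProduct (u t) (vt t)
          + ((k₃ + 2 * Tr' t * (1 + u t ⬝ᵥ ur t) / Tr t)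
              / (1 + u t ⬝ᵥ ur t)^2) • crossProduct (u t) (ur t)
          - crossProduct (u t)
              (crossProduct (u t) (crossProduct (ur t) (ur' t))))
        (u t)) :
    (∀ t, HasDerivAt
        (fun s => (Tr s)^2 / (k₂ * m^2) * (1 - u s ⬝ᵥ ur s)
            + (1/2) * (vt s ⬝ᵥ vt s))
        (-(k₃ / k₂) * ((Tr t)^2 / m^2)
            * ((crossProduct (u t) (ur t)) ⬝ᵥ (crossProduct (u t) (ur t)))
            / (1 + u t ⬝ᵥ ur t)^2
          - k₁ * (u t ⬝ᵥ vt t)^2) t)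
      ∧ ∀ t, (-(k₃ / k₂) * ((Tr t)^2 / m^2)
            * ((crossProduct (u t) (ur t)) ⬝ᵥ (crossProduct (u t) (ur t)))
            / (1 + u t ⬝ᵥ ur t)^2
          - k₁ * (u t ⬝ᵥ vt t)^2) ≤ 0 := by
  have hFF : ∀ t, 0 < F t ⬝ᵥ F t := fun t => Real.sqrt_pos.1 (hc.trans_le (hFlow t))
  have hTpos : ∀ t, 0 < Tr t := fun t => hTr t ▸ Real.sqrt_pos.2 (hFF t)
  have hur_unit : ∀ t, ur t ⬝ᵥ ur t = 1 := fun t => by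
    rw [hur t, hTr t]; exact inv_sqrt_smul_dotProduct_self (hFF t)
  refine ⟨fun t => ?_, fun t => lyapunov_rate_nonpos hk₁.le hk₂.le hk₃.le _ _ _ _ _⟩
  have hFur : F t = Tr t • ur t := by rw [hur t, smul_inv_smul₀ (hTpos t).ne']
  have halign := (hu t).dotProduct (hur' t)
  rw [hkin t, thrust_alignment_rate _ _ (hunit t) (hur_unit t)
    (HasDerivAt.dotProduct_eq_zero_of_dotProduct_self_eq (hur' t) hur_unit)] at halign
  have hvv := (hvt t).dotProduct (hvt t)
  have hvt_dot : m * (vt t ⬝ᵥ vt' t)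
      = -(Tr t * (u t ⬝ᵥ ur t) + k₁ * m * (u t ⬝ᵥ vt t)) * (u t ⬝ᵥ vt t)
        + Tr t * (vt t ⬝ᵥ ur t) := by
    rw [← smul_eq_mul, ← dotProduct_smul, hdyn t, hFur, dotProduct_add, dotProduct_smul,
      dotProduct_smul, smul_eq_mul, smul_eq_mul, dotProduct_comm (vt t) (u t)]
  refine ((((hTr' t).pow 2).div_const (k₂ * m ^ 2)).mul (halign.const_sub 1)).add
    (hvv.const_mul (1 / 2)) |>.congr_deriv ?_
  rw [cross_dot_cross, hunit, hur_unit, dotProduct_comm (vt' t), dotProduct_comm (ur t)]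
  have hT := (hTpos t).ne'
  have hang_ne := (hang t).ne'
  simp only [Pi.pow_apply]
  field_simp
  linear_combination 2 * k₂ * m * (1 + u t ⬝ᵥ ur t) ^ 2 * hvt_dot

theorem velocity_tracking_lyapunov_derivative
    (m k₁ k₂ k₃ c : ℝ) (hm : 0 < m) (hk₁ : 0 < k₁) (hk₂ : 0 < k₂)
    (hk₃ : 0 < k₃) (hc : 0 < c)
    (vt vt' u u' F F' ur ur' : ℝ → Fin 3 → ℝ) (Tr Tr' : ℝ → ℝ)
    (hunit : ∀ t, u t ⬝ᵥ u t = 1)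
    (hF : ∀ t, HasDerivAt F (F' t) t)
    (hFlow : ∀ t, c ≤ Real.sqrt (F t ⬝ᵥ F t))
    (hTr : ∀ t, Tr t = Real.sqrt (F t ⬝ᵥ F t))
    (hTr' : ∀ t, HasDerivAt Tr (Tr' t) t)
    (hur : ∀ t, ur t = (Tr t)⁻¹ • F t)
    (hur' : ∀ t, HasDerivAt ur (ur' t) t)
    (hang : ∀ t, 0 < 1 + u t ⬝ᵥ ur t)
    (hvt : ∀ t, HasDerivAt vt (vt' t) t)
    (hdyn : ∀ t, m • vt' t
        = -(Tr t * (u t ⬝ᵥ ur t) + k₁ * m * (u t ⬝ᵥ vt t)) • u t + F t)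
    (hu : ∀ t, HasDerivAt u (u' t) t)
    (hkin : ∀ t, u' t = crossProduct
        ((k₂ * m / Tr t) • crossProduct (u t) (vt t)
          + ((k₃ + 2 * Tr' t * (1 + u t ⬝ᵥ ur t) / Tr t)
              / (1 + u t ⬝ᵥ ur t)^2) • crossProduct (u t) (ur t)
          - crossProduct (u t)
              (crossProduct (u t) (crossProduct (ur t) (ur' t))))
        (u t)) :
    (∀ t, HasDerivAt
        (fun s => (Tr s)^2 / (k₂ * m^2) * (1 - u s ⬝ᵥ ur s)
            + (1/2) * (vt s ⬝ᵥ vt s))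
        (-(k₃ / k₂) * ((Tr t)^2 / m^2)
            * ((crossProduct (u t) (ur t)) ⬝ᵥ (crossProduct (u t) (ur t)))
            / (1 + u t ⬝ᵥ ur t)^2
          - k₁ * (u t ⬝ᵥ vt t)^2) t)
      ∧ ∀ t, (-(k₃ / k₂) * ((Tr t)^2 / m^2)
            * ((crossProduct (u t) (ur t)) ⬝ᵥ (crossProduct (u t) (ur t)))
            / (1 + u t ⬝ᵥ ur t)^2
          - k₁ * (u t ⬝ᵥ vt t)^2) ≤ 0 :=
  velocity_tracking_lyapunov_derivative_general m k₁ k₂ k₃ c hm hk₁ hk₂ hk₃ hc vt vt' u u' F ur ur'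
    Tr Tr' hunit hFlow hTr hTr' hur hur' hang hvt hdyn hu hkin
end
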